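/- Let N be a matroid and let x be an element of the ground set of N that is freely placed in N. Then N is a gammoid if and only if N\x (the deletion of x from N) is a gammoid. -/

import Mathlib

/-!
Common definitions: digraphs, linkings, gammoids, minors, isomorphism.
-/

universe u v

open Set

/-- `X` is linked to `T` in the digraph on vertex type `V` with arc relation `A`:
there is a family of pairwise vertex-disjoint directed paths, one starting at each
vertex of `X`, each ending at a vertex of `T`. A path may be a single vertex. -/
def Linked {V : Type*} (A : V → V → Prop) (T X : Set V) : Prop :=
  ∃ P : V → List V,
    (∀ x ∈ X, (P x).head? = some x ∧ (P x).Nodup ∧ (P x).Chain' A ∧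
      ∃ t ∈ T, (P x).getLast? = some t) ∧
    ∀ x ∈ X, ∀ y ∈ X, x ≠ y → ∀ v, v ∈ (P x) → v ∉ (P y)

/-- `M` is the matroid `L(G,S,T)`: its ground set is `S`, and its independent sets
are exactly the subsets of `S` that are linked to `T`. -/
def IsLinkMatroid {V : Type*} (A : V → V → Prop) (S T : Set V) (M : Matroid V) : Prop :=
  M.E = S ∧ ∀ I : Set V, M.Indep I ↔ I ⊆ S ∧ Linked A T I

/-- A matroid is a gammoid if it is (isomorphic to) a matroid of the form `L(G,S,T)`:
there are a digraph on a vertex type `V`, a target set `T ⊆ V`, and an injection `e`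
of the ground set into `V` (whose image plays the role of `S`), such that a set is
independent if and only if its image is linked to `T`. -/
def IsGammoid {α : Type u} (M : Matroid α) : Prop :=
  ∃ (V : Type u) (A : V → V → Prop) (T : Set V) (e : α → V),
    Set.InjOn e M.E ∧ ∀ I, I ⊆ M.E → (M.Indep I ↔ Linked A T (e '' I))

/-- Deletion of a set from a matroid. -/
def Matroid.del {α : Type*} (M : Matroid α) (D : Set α) : Matroid α := M.restrict (M.E \ D)

/-- Contraction of a set from a matroid, defined by duality. -/
def Matroid.con {α : Type*} (M : Matroid α) (C : Set α) : Matroid α := (M✶.del C)✶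

/-- One step of taking a minor: a single deletion or a single contraction. -/
def MinorStep {α : Type*} (N M : Matroid α) : Prop :=
  (∃ D, N = M.del D) ∨ (∃ C, N = M.con C)

/-- `N` is a minor of `M` if it is obtained from `M` by a sequence of deletions
and contractions. -/
def IsMinor {α : Type*} (N M : Matroid α) : Prop :=
  Relation.ReflTransGen MinorStep N M

/-- Isomorphism of matroids: a bijection between the ground sets under which
independence is preserved and reflected. -/
def MatroidIso {α : Type u} {β : Type v} (M : Matroid α) (N : Matroid β) : Prop :=
  ∃ e : α → β, Set.BijOn e M.E N.E ∧ ∀ I, I ⊆ M.E → (M.Indep I ↔ N.Indep (e '' I))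

/-- An excluded minor for the class of gammoids: a matroid that is not a gammoid,
every proper minor of which is a gammoid. -/
def IsExcludedMinor {α : Type u} (M : Matroid α) : Prop :=
  ¬ IsGammoid M ∧ ∀ N : Matroid α, IsMinor N M → N ≠ M → IsGammoid N

/-- A circuit: a minimal dependent set. -/
def IsCircuit {α : Type*} (M : Matroid α) (C : Set α) : Prop :=
  C ⊆ M.E ∧ ¬ M.Indep C ∧ ∀ C' : Set α, C' ⊂ C → M.Indep C'

/-- A coloop: an element contained in every base. -/
def IsColoop {α : Type*} (M : Matroid α) (x : α) : Prop :=
  x ∈ M.E ∧ ∀ B, M.IsBase B → x ∈ B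

/-!
If `x` is not a coloop of `N`, then for an independent `J ⊆ E - x` the set `J + x` is
independent iff `x ∉ cl J`, and since `x` is freely placed this happens iff `J` is not
spanning, i.e. iff `J + s` is independent for some `s ∈ E - x`. So a representation of
`N \ x` extends to one of `N` by a new source vertex for `x` with an arc to every vertex
representing `E - x`: a linked path from the new source is an arc to some `s` followed by
a linked path from `s`. If `x` is a coloop, it is represented by a new isolated target.
Conversely, restrictions of gammoids are gammoids.
-/

open Function

section Linking

variable {V W : Type*} {A : V → V → Prop} {T X : Set V}

def IsLinkPath (A : V → V → Prop) (T : Set V) (x : V) (l : List V) : Prop :=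
  l.head? = some x ∧ l.Nodup ∧ l.IsChain A ∧ ∃ t ∈ T, l.getLast? = some t

theorem linked_iff_exists_isLinkPath :
    Linked A T X ↔ ∃ P : V → List V, (∀ x ∈ X, IsLinkPath A T x (P x)) ∧
      ∀ x ∈ X, ∀ y ∈ X, x ≠ y → ∀ v ∈ P x, v ∉ P y :=
  Iff.rfl

theorem Linked.subset {Y : Set V} (h : Linked A T X) (hYX : Y ⊆ X) : Linked A T Y := by
  obtain ⟨P, hP, hdisj⟩ := linked_iff_exists_isLinkPath.1 h
  exact ⟨P, fun x hx => hP x (hYX hx), fun x hx y hy => hdisj x (hYX hx) y (hYX hy)⟩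

theorem IsLinkPath.notMem_of_source {x u : V} {l : List V} (hl : IsLinkPath A T x l)
    (hu : ∀ v, ¬ A v u) (hxu : x ≠ u) : u ∉ l := fun hul =>
  List.IsChain.induction (· ≠ u) l hl.2.2.1 (fun a _ hab _ hb => hu a (hb ▸ hab))
    (fun hne hhead => hxu <| Option.some_injective _ <| by
      rw [← hl.1, List.head?_eq_some_head hne, hhead]) u hul rfl

theorem linked_insert_of_isLinkPath {P : V → List V} (hP : ∀ x ∈ X, IsLinkPath A T x (P x))
    (hdisj : ∀ x ∈ X, ∀ y ∈ X, x ≠ y → ∀ v ∈ P x, v ∉ P y) {u : V} {q : List V}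
    (hq : IsLinkPath A T u q) (huX : u ∉ X) (hqP : ∀ x ∈ X, ∀ v ∈ q, v ∉ P x) :
    Linked A T (insert u X) := by
  classical
  have hPX : ∀ x ∈ X, update P u q x = P x := fun x hx =>
    update_of_ne (ne_of_mem_of_not_mem hx huX) _ _
  refine linked_iff_exists_isLinkPath.2 ⟨update P u q, ?_, ?_⟩
  · rintro x (rfl | hx)
    · simpa using hq
    · simpa [hPX x hx] using hP x hx
  · rintro x (rfl | hx) y (rfl | hy) hxy v hv hv'
    · exact hxy rfl
    · rw [update_self] at hv
      rw [hPX y hy] at hv'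
      exact hqP y hy v hv hv'
    · rw [update_self] at hv'
      rw [hPX x hx] at hv
      exact hqP x hx v hv' hv
    · rw [hPX x hx] at hv
      rw [hPX y hy] at hv'
      exact hdisj x hx y hy hxy v hv hv'

theorem Linked.insert_of_isolated_target {u : V} (h : Linked A T X) (hu : ∀ v, ¬ A v u)
    (huT : u ∈ T) (huX : u ∉ X) : Linked A T (insert u X) := by
  obtain ⟨P, hP, hdisj⟩ := linked_iff_exists_isLinkPath.1 h
  refine linked_insert_of_isLinkPath hP hdisj
    ⟨rfl, List.nodup_singleton u, List.isChain_singleton u, u, huT, rfl⟩ huX ?_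
  rintro x hx v hv
  rw [List.mem_singleton.1 hv]
  exact (hP x hx).notMem_of_source hu (ne_of_mem_of_not_mem hx huX)

theorem Linked.insert_of_source {u w : V} (h : Linked A T (insert w X)) (hwX : w ∉ X)
    (huX : u ∉ X) (hu : ∀ v, ¬ A v u) (huw : A u w) : Linked A T (insert u X) := by
  obtain ⟨P, hP, hdisj⟩ := linked_iff_exists_isLinkPath.1 h
  obtain ⟨hhead, hnodup, hchain, t, ht, hlast⟩ := hP w (mem_insert w X)
  obtain ⟨l, hl⟩ := List.head?_eq_some_iff.1 hhead
  have huP : ∀ x ∈ insert w X, x ≠ u → u ∉ P x := fun x hx hxu =>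
    (hP x hx).notMem_of_source hu hxu
  refine linked_insert_of_isLinkPath (fun x hx => hP x (mem_insert_of_mem w hx))
    (fun x hx y hy => hdisj x (mem_insert_of_mem w hx) y (mem_insert_of_mem w hy))
    (q := u :: P w) ⟨rfl, ?_, ?_, t, ht, ?_⟩ huX ?_
  · exact List.nodup_cons.2 ⟨huP w (mem_insert w X) (fun h => hu u (h ▸ huw)), hnodup⟩
  · rw [hl] at hchain ⊢
    exact hchain.cons_cons huw
  · rw [hl] at hlast ⊢
    rwa [List.getLast?_cons_cons]
  · rintro x hx v (_ | ⟨_, hv⟩)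
    · exact huP x (mem_insert_of_mem w hx) (ne_of_mem_of_not_mem hx huX)
    · exact hdisj w (mem_insert w X) x (mem_insert_of_mem w hx)
        (ne_of_mem_of_not_mem hx hwX).symm v hv

theorem Linked.exists_insert_of_insert {u : V} (h : Linked A T (insert u X)) (huX : u ∉ X)
    (huT : u ∉ T) : ∃ w, A u w ∧ w ∉ X ∧ Linked A T (insert w X) := by
  obtain ⟨P, hP, hdisj⟩ := linked_iff_exists_isLinkPath.1 h
  obtain ⟨hhead, hnodup, hchain, t, ht, hlast⟩ := hP u (mem_insert u X)
  obtain ⟨l, hl⟩ := List.head?_eq_some_iff.1 hhead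
  obtain ⟨w, r, rfl⟩ : ∃ w r, l = w :: r := by
    refine List.exists_cons_of_ne_nil ?_
    rintro rfl
    rw [hl] at hlast
    cases hlast
    exact huT ht
  rw [hl] at hnodup hchain hlast
  have hdisjU : ∀ x ∈ X, ∀ v ∈ w :: r, v ∉ P x := fun x hx v hv =>
    hdisj u (mem_insert u X) x (mem_insert_of_mem u hx) (ne_of_mem_of_not_mem hx huX).symm v
      (hl ▸ List.mem_cons_of_mem u hv)
  have hwX : w ∉ X := fun hwX => hdisjU w hwX w List.mem_cons_self
    (List.mem_of_mem_head? (hP w (mem_insert_of_mem u hwX)).1)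
  refine ⟨w, (List.isChain_cons_cons.1 hchain).1, hwX, linked_insert_of_isLinkPath
    (fun x hx => hP x (mem_insert_of_mem u hx))
    (fun x hx y hy => hdisj x (mem_insert_of_mem u hx) y (mem_insert_of_mem u hy))
    ⟨rfl, hnodup.of_cons, (List.isChain_cons_cons.1 hchain).2, t, ht, ?_⟩ hwX hdisjU⟩
  rwa [List.getLast?_cons_cons] at hlast

theorem Linked.image {B : W → W → Prop} {T' : Set W} {f : V → W} (hf : Injective f)
    (hAB : ∀ a b, A a b → B (f a) (f b)) (hT : MapsTo f T T') (h : Linked A T X) :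
    Linked B T' (f '' X) := by
  obtain ⟨P, hP, hdisj⟩ := linked_iff_exists_isLinkPath.1 h
  have hP' : ∀ a, extend f (fun a => (P a).map f) (fun _ => []) (f a) = (P a).map f :=
    hf.extend_apply _ _
  refine linked_iff_exists_isLinkPath.2 ⟨extend f (fun a => (P a).map f) (fun _ => []), ?_, ?_⟩
  · rintro _ ⟨x, hx, rfl⟩
    obtain ⟨hhead, hnodup, hchain, t, ht, hlast⟩ := hP x hx
    refine ⟨?_, ?_, ?_, f t, hT ht, ?_⟩ <;> rw [hP']
    · rw [List.head?_map, hhead, Option.map_some]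
    · exact hnodup.map hf
    · exact List.isChain_map_of_isChain f hAB hchain
    · rw [List.getLast?_map, hlast, Option.map_some]
  · rintro _ ⟨x, hx, rfl⟩ _ ⟨y, hy, rfl⟩ hxy _ hv hv'
    rw [hP', List.mem_map] at hv hv'
    obtain ⟨v, hv, rfl⟩ := hv
    obtain ⟨v', hv', hvv'⟩ := hv'
    exact hdisj x hx y hy (ne_of_apply_ne f hxy) v hv (hf hvv' ▸ hv')

theorem Linked.preimage {B : W → W → Prop} {T' X' : Set W} {f : V → W} (hf : Injective f)
    (hB : ∀ u v, B u v → v ∈ range f) (h : Linked B T' X') :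
    Linked (fun a b => B (f a) (f b)) (f ⁻¹' T') (f ⁻¹' X') := by
  obtain ⟨P, hP, hdisj⟩ := linked_iff_exists_isLinkPath.1 h
  have hrange : ∀ a ∈ f ⁻¹' X', P (f a) ∈ range (List.map f) := by
    intro a ha
    rw [Set.range_list_map]
    exact List.IsChain.induction (· ∈ range f) _ (hP _ ha).2.2.1 (fun u v huv _ => hB u v huv)
      (fun hne => ⟨a, Option.some_injective _ <| by
        rw [← (hP _ ha).1, List.head?_eq_some_head hne]⟩)
  choose! Q hQ using hrange
  refine linked_iff_exists_isLinkPath.2 ⟨Q, fun a ha => ?_, fun a ha b hb hab v hv hv' => ?_⟩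
  · obtain ⟨hhead, hnodup, hchain, t, ht, hlast⟩ := hP _ ha
    rw [← hQ a ha] at hhead hnodup hchain hlast
    rw [List.head?_map, Option.map_eq_some_iff] at hhead
    rw [List.getLast?_map, Option.map_eq_some_iff] at hlast
    obtain ⟨a', ha', haa'⟩ := hhead
    obtain ⟨t', ht', rfl⟩ := hlast
    exact ⟨hf haa' ▸ ha', hnodup.of_map f, List.isChain_map f |>.1 hchain, t', ht, ht'⟩
  · refine hdisj _ ha _ hb (hf.ne hab) (f v) ?_ ?_
    · exact hQ a ha ▸ List.mem_map_of_mem hv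
    · exact hQ b hb ▸ List.mem_map_of_mem hv'

def withSource (A : V → V → Prop) (S : Set V) : Option V → Option V → Prop
  | some a, some b => A a b
  | none, some b => b ∈ S
  | _, none => False

theorem not_withSource_none {S : Set V} (v : Option V) : ¬ withSource A S v none := by
  cases v <;> exact id

theorem withSource_mem_range {S : Set V} : ∀ u v, withSource A S u v → v ∈ range some
  | _, some b, _ => mem_range_self b
  | u, none, h => absurd h (not_withSource_none u)

theorem linked_withSource_image_some_iff {S : Set V} {T' : Set (Option V)}
    (hT : some ⁻¹' T' = T) :
    Linked (withSource A S) T' (some '' X) ↔ Linked A T X := by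
  subst hT
  refine ⟨fun h => ?_, fun h =>
    h.image (Option.some_injective V) (fun _ _ => id) (mapsTo_preimage _ _)⟩
  have h' := h.preimage (Option.some_injective V) withSource_mem_range
  rwa [preimage_image_eq X (Option.some_injective V)] at h'

theorem linked_withSource_insert_none_iff {S : Set V} :
    Linked (withSource A S) (some '' T) (insert none (some '' X)) ↔
      ∃ w ∈ S, w ∉ X ∧ Linked A T (insert w X) := by
  have hT : some ⁻¹' (some '' T) = T := preimage_image_eq T (Option.some_injective V)
  constructor
  · intro h
    obtain ⟨_ | w, hw, hwX, hlink⟩ := h.exists_insert_of_insert (by simp) (by simp)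
    · exact absurd hw (not_withSource_none _)
    refine ⟨w, hw, fun h => hwX (mem_image_of_mem some h), ?_⟩
    rwa [← linked_withSource_image_some_iff hT, image_insert_eq]
  · rintro ⟨w, hwS, hwX, hlink⟩
    rw [← linked_withSource_image_some_iff (S := S) hT, image_insert_eq] at hlink
    exact hlink.insert_of_source (by simpa using hwX) (by simp) not_withSource_none hwS

theorem linked_withSource_insert_none_of_target_iff {S : Set V} :
    Linked (withSource A S) (insert none (some '' T)) (insert none (some '' X)) ↔
      Linked A T X := by
  have hT : some ⁻¹' insert none (some '' T) = T := by ext; simp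
  rw [← linked_withSource_image_some_iff (S := S) hT]
  exact ⟨fun h => h.subset (subset_insert _ _),
    fun h => h.insert_of_isolated_target not_withSource_none (mem_insert _ _) (by simp)⟩

end Linking

section Gammoid

variable {α : Type u} {N : Matroid α} {x : α}

theorem isCircuit_iff_matroid_isCircuit {C : Set α} : IsCircuit N C ↔ N.IsCircuit C := by
  rw [Matroid.isCircuit_iff_forall_ssubset, Matroid.Dep, IsCircuit]
  tauto

theorem Matroid.Indep.spanning_of_mem_closure_of_freelyPlaced
    (hfree : ∀ C, N.IsCircuit C → x ∈ C → N.Spanning C) {J : Set α} (hJ : N.Indep J)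
    (hxJ : x ∉ J) (hxcl : x ∈ N.closure J) : N.Spanning J := by
  have hC := hJ.fundCircuit_isCircuit hxcl hxJ
  have hxJ_span : N.Spanning (insert x J) :=
    (hfree _ hC (N.mem_fundCircuit x J)).superset (N.fundCircuit_subset_insert x J)
      (insert_subset (N.closure_subset_ground J hxcl) hJ.subset_ground)
  rwa [Matroid.spanning_iff_closure_eq, Matroid.closure_insert_eq_of_mem_closure hxcl,
    ← Matroid.spanning_iff_closure_eq] at hxJ_span

theorem Matroid.Indep.insert_indep_iff_exists_of_freelyPlaced
    (hfree : ∀ C, N.IsCircuit C → x ∈ C → N.Spanning C) (hxcl : x ∈ N.closure (N.E \ {x}))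
    {J : Set α} (hJ : N.Indep J) (hxJ : x ∉ J) :
    N.Indep (insert x J) ↔ ∃ s ∈ N.E \ {x}, s ∉ J ∧ N.Indep (insert s J) := by
  rw [hJ.insert_indep_iff_of_notMem hxJ]
  constructor
  · rintro ⟨-, hxJcl⟩
    obtain ⟨s, hs, hsJ⟩ := not_subset.1 fun h => hxJcl <| by
      simpa using N.closure_subset_closure_of_subset_closure h hxcl
    exact ⟨s, hs, fun h => hsJ (N.subset_closure J hJ.subset_ground h),
      hJ.insert_indep_iff.2 (.inl ⟨hs.1, hsJ⟩)⟩
  · rintro ⟨s, hs, hsJ, hsJi⟩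
    refine ⟨N.closure_subset_ground _ hxcl, fun hxJcl => ?_⟩
    have hspan := hJ.spanning_of_mem_closure_of_freelyPlaced hfree hxJ hxJcl
    exact ((hJ.insert_indep_iff_of_notMem hsJ).1 hsJi).2 (hspan.closure_eq ▸ hs.1)

theorem IsGammoid.restrict (h : IsGammoid N) {R : Set α} (hR : R ⊆ N.E) :
    IsGammoid (N.restrict R) := by
  obtain ⟨V, A, T, e, hinj, hrep⟩ := h
  refine ⟨V, A, T, e, hinj.mono hR, fun I (hI : I ⊆ R) => ?_⟩
  rw [Matroid.restrict_indep_iff, and_iff_left hI, hrep I (hI.trans hR)]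

theorem isGammoid_of_linked_insert_none {V : Type u} {A : V → V → Prop} {T : Set V}
    {e : α → V} (hinj : InjOn e (N.E \ {x}))
    (hrep : ∀ I ⊆ N.E \ {x}, N.Indep I ↔ Linked A T (e '' I))
    {A' : Option V → Option V → Prop} {T' : Set (Option V)}
    (hsome : ∀ X, Linked A' T' (some '' X) ↔ Linked A T X)
    (hins : ∀ J ⊆ N.E \ {x}, x ∈ N.E → N.Indep J →
      (N.Indep (insert x J) ↔ Linked A' T' (insert none (some '' (e '' J))))) :
    IsGammoid N := by
  classical
  have himage (J : Set α) (hxJ : x ∉ J) :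
      update (some ∘ e) x none '' J = some '' (e '' J) := by
    rw [image_image]
    exact image_congr fun a ha => update_of_ne (ne_of_mem_of_not_mem ha hxJ) _ _
  refine ⟨Option V, A', T', update (some ∘ e) x none, ?_, fun I hI => ?_⟩
  · intro a ha b hb hab
    by_cases hax : a = x <;> by_cases hbx : b = x
    · rw [hax, hbx]
    all_goals simp_all [update_of_ne, hinj.eq_iff]
  by_cases hxI : x ∈ I
  · obtain ⟨J, hxJ, rfl⟩ : ∃ J, x ∉ J ∧ I = insert x J :=
      ⟨I \ {x}, fun h : x ∈ I \ {x} => h.2 rfl, (insert_sdiff_self_of_mem hxI).symm⟩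
    have hJ : J ⊆ N.E \ {x} := subset_sdiff_singleton ((subset_insert x J).trans hI) hxJ
    rw [image_insert_eq, update_self, himage J hxJ]
    by_cases hJi : N.Indep J
    · exact hins J hJ (hI (mem_insert x J)) hJi
    · refine iff_of_false (fun h => hJi (h.subset (subset_insert x J))) fun h => hJi ?_
      exact (hrep J hJ).2 ((hsome _).1 (h.subset (subset_insert _ _)))
  · rw [himage I hxI, hsome, hrep I (subset_sdiff_singleton hI hxI)]

end Gammoid

theorem gammoid_iff_delete_freely_placed_general {α : Type u} (N : Matroid α) (x : α)
    (hfree : ∀ C : Set α, IsCircuit N C → x ∈ C → N.Spanning C) :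
    IsGammoid N ↔ IsGammoid (N.del {x}) := by
  refine ⟨fun h => h.restrict sdiff_subset, fun ⟨V, A, T, e, hinj, hrep⟩ => ?_⟩
  replace hfree : ∀ C, N.IsCircuit C → x ∈ C → N.Spanning C := fun C hC =>
    hfree C (isCircuit_iff_matroid_isCircuit.2 hC)
  replace hrep : ∀ I ⊆ N.E \ {x}, N.Indep I ↔ Linked A T (e '' I) := fun I hI => by
    rw [← hrep I hI, Matroid.del, Matroid.restrict_indep_iff, and_iff_left hI]
  by_cases hxcl : x ∈ N.closure (N.E \ {x})
  · refine isGammoid_of_linked_insert_none hinj hrep (A' := withSource A (e '' (N.E \ {x})))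
      (fun X => linked_withSource_image_some_iff (preimage_image_eq T (Option.some_injective V)))
      fun J hJ _ hJi => ?_
    rw [hJi.insert_indep_iff_exists_of_freelyPlaced hfree hxcl (hJ · |>.2 rfl),
      linked_withSource_insert_none_iff, exists_mem_image]
    refine exists_congr fun s => and_congr_right fun hs => ?_
    rw [hinj.mem_image_iff hJ hs, ← image_insert_eq, ← hrep _ (insert_subset hs hJ)]
  · refine isGammoid_of_linked_insert_none hinj hrep (A' := withSource A ∅)
      (T' := insert none (some '' T))
      (fun X => linked_withSource_image_some_iff (by ext; simp)) fun J hJ hx hJi => ?_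
    rw [linked_withSource_insert_none_of_target_iff, ← hrep J hJ]
    exact iff_of_true
      (((Matroid.isColoop_iff_notMem_closure_compl hx).2 hxcl).insert_indep_of_indep hJi) hJi

/-- If `x` is freely placed in `N` (every circuit of `N` containing `x` is
spanning), then `N` is a gammoid if and only if `N \ x` is a gammoid. -/
theorem gammoid_iff_delete_freely_placed {α : Type u} (N : Matroid α)
    (hfin : N.Finite) (x : α) (hx : x ∈ N.E)
    (hfree : ∀ C : Set α, IsCircuit N C → x ∈ C → N.Spanning C) :
    IsGammoid N ↔ IsGammoid (N.del {x}) :=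
  gammoid_iff_delete_freely_placed_general N x hfree
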